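/- Define M_{D'}(m,s) := \sum_{n | m} \mu(m/n) (D'/(m/n)) n^{1-s} \sigma_{2s-1}(n). Then for a prime p and integer r \ge 1, the recursion M_{D'}(p^{r+1}, s) = (p^{1-s} + p^{s}) M_{D'}(p^r, s) - p \cdot M_{D'}(p^{r-1}, s) holds. -/

import Mathlib

open scoped BigOperators

/-- The Kronecker symbol at 2: `(a/2)`. -/
def kroneckerAt2 (a : ℤ) : ℤ :=
  if a % 2 = 0 then 0 else if a % 8 = 1 ∨ a % 8 = 7 then 1 else -1

/-- The Kronecker symbol `(a/n)` for a natural number `n`, defined via the Jacobi symbol on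
the odd part of `n` and the symbol `(a/2)` on the 2-part of `n`. -/
def kroneckerSym (a : ℤ) (n : ℕ) : ℤ :=
  kroneckerAt2 a ^ (n.factorization 2) * jacobiSym a (n / 2 ^ (n.factorization 2))

/-- The divisor sum with complex exponent `w`. -/
noncomputable def sigmaC (w : ℂ) (n : ℕ) : ℂ := ∑ d ∈ n.divisors, (d : ℂ) ^ w

/-- `M_D(m,s)`, the twisted divisor sum of the paper. -/
noncomputable def Mfun (D : ℤ) (m : ℕ) (s : ℂ) : ℂ :=
  ∑ n ∈ m.divisors, (ArithmeticFunction.moebius (m / n) : ℂ) *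
    (kroneckerSym D (m / n) : ℂ) * (n : ℂ) ^ (1 - s) * sigmaC (2 * s - 1) n

/-! With `x = p^s` and `y = p^{1-s}`, the normalized divisor sum `n^{1-s} σ_{2s-1}(n)` at `n = p^k`
is the complete homogeneous sum `h_{k+1} = ∑_{i+j=k} x^i y^j`, and only the divisors `p^{k+1}` and
`p^k` of `p^{k+1}` survive the Möbius factor, so `M_{D'}(p^k, s) = h_{k+1} - (D'/p) h_k`.
Since `xy = p`, the sequence `h` satisfies `h_{n+2} = (x + y) h_{n+1} - p h_n`, and this linear
recursion passes to `M`. -/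

open Finset

lemma kroneckerSym_one (a : ℤ) : kroneckerSym a 1 = 1 := by
  simp [kroneckerSym]

section CommRing

variable {R : Type*} [CommRing R]

def geomSum₂ (x y : R) (n : ℕ) : R :=
  ∑ i ∈ range n, x ^ i * y ^ (n - 1 - i)

lemma geomSum₂_add_two (x y : R) (n : ℕ) :
    geomSum₂ x y (n + 2) = (x + y) * geomSum₂ x y (n + 1) - x * y * geomSum₂ x y n := by
  have hx : geomSum₂ x y (n + 2) = x ^ (n + 1) + y * geomSum₂ x y (n + 1) :=
    geom_sum₂_succ_eq x y
  have hy : geomSum₂ x y (n + 1) = x ^ n + y * geomSum₂ x y n := geom_sum₂_succ_eq x y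
  linear_combination hx - x * hy

lemma sum_divisors_prime_pow_succ_moebius {p : ℕ} (hp : p.Prime) (k : ℕ) (g f : ℕ → R) :
    ∑ n ∈ (p ^ (k + 1)).divisors, (ArithmeticFunction.moebius (p ^ (k + 1) / n) : R) *
      (g (p ^ (k + 1) / n) * f n) = g 1 * f (p ^ (k + 1)) - g p * f (p ^ k) := by
  have hdiv : ∀ i ≤ k + 1, p ^ (k + 1) / p ^ i = p ^ (k + 1 - i) := fun i hi =>
    Nat.pow_div hi hp.pos
  rw [Nat.sum_divisors_prime_pow hp, sum_range_succ, sum_range_succ, sum_eq_zero,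
    hdiv k (by omega), hdiv (k + 1) le_rfl]
  · rw [Nat.add_sub_cancel_left, pow_one, Nat.sub_self, pow_zero,
      ArithmeticFunction.moebius_apply_prime hp, ArithmeticFunction.moebius_apply_one]
    push_cast
    ring
  · intro i hi
    rw [mem_range] at hi
    rw [hdiv i (by omega), ArithmeticFunction.moebius_apply_prime_pow hp (by omega),
      if_neg (by omega)]
    simp

end CommRing

lemma natCast_pow_cpow (p j : ℕ) (w : ℂ) : ((p ^ j : ℕ) : ℂ) ^ w = ((p : ℂ) ^ w) ^ j := by
  rw [Nat.cast_pow, ← Complex.natCast_cpow_natCast_mul, Complex.cpow_nat_mul]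

lemma natCast_cpow_mul_cpow_one_sub {p : ℕ} (hp : p ≠ 0) (s : ℂ) :
    (p : ℂ) ^ s * (p : ℂ) ^ (1 - s) = p := by
  rw [← Complex.cpow_add _ _ (Nat.cast_ne_zero.mpr hp), add_sub_cancel, Complex.cpow_one]

lemma cpow_one_sub_mul_sigmaC_prime_pow {p : ℕ} (hp : p.Prime) (s : ℂ) (k : ℕ) :
    ((p ^ k : ℕ) : ℂ) ^ (1 - s) * sigmaC (2 * s - 1) (p ^ k) =
      geomSum₂ ((p : ℂ) ^ s) ((p : ℂ) ^ (1 - s)) (k + 1) := by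
  have hq : (p : ℂ) ^ (1 - s) * (p : ℂ) ^ (2 * s - 1) = (p : ℂ) ^ s := by
    rw [← Complex.cpow_add _ _ (Nat.cast_ne_zero.mpr hp.ne_zero)]
    ring_nf
  rw [sigmaC, Nat.sum_divisors_prime_pow hp, mul_sum, geomSum₂]
  refine sum_congr rfl fun j hj => ?_
  have hjk : j + (k - j) = k := by have := mem_range.mp hj; omega
  rw [natCast_pow_cpow, natCast_pow_cpow, Nat.add_sub_cancel, ← hq, mul_pow, ← hjk, pow_add,
    Nat.add_sub_cancel_left]
  ring

lemma Mfun_prime_pow (D : ℤ) {p : ℕ} (hp : p.Prime) (s : ℂ) (k : ℕ) :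
    Mfun D (p ^ k) s = geomSum₂ ((p : ℂ) ^ s) ((p : ℂ) ^ (1 - s)) (k + 1) -
      kroneckerSym D p * geomSum₂ ((p : ℂ) ^ s) ((p : ℂ) ^ (1 - s)) k := by
  cases k with
  | zero => simp [Mfun, geomSum₂, sigmaC, kroneckerSym_one]
  | succ k =>
    simp_rw [Mfun, mul_assoc]
    rw [sum_divisors_prime_pow_succ_moebius hp k (fun n ↦ (kroneckerSym D n : ℂ)),
      cpow_one_sub_mul_sigmaC_prime_pow hp, cpow_one_sub_mul_sigmaC_prime_pow hp, kroneckerSym_one]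
    ring

/-- The recursion for `M` at prime powers. -/
theorem Mfun_prime_pow_recursion (D' : ℤ) (p : ℕ) (hp : p.Prime) (r : ℕ) (hr : 1 ≤ r)
    (s : ℂ) :
    Mfun D' (p ^ (r + 1)) s =
      ((p : ℂ) ^ (1 - s) + (p : ℂ) ^ s) * Mfun D' (p ^ r) s -
        (p : ℂ) * Mfun D' (p ^ (r - 1)) s := by
  obtain ⟨m, rfl⟩ : ∃ m, r = m + 1 := ⟨r - 1, by omega⟩
  rw [Nat.add_sub_cancel, Mfun_prime_pow D' hp, Mfun_prime_pow D' hp, Mfun_prime_pow D' hp,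
    geomSum₂_add_two, geomSum₂_add_two, natCast_cpow_mul_cpow_one_sub hp.ne_zero]
  ring
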